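/- Let f be a Schwartz function on ℝ^d, 0 < α < 2, and g = ∂_k f for some coordinate direction k. Suppose g attains a positive maximum at a point x̄ ∈ ℝ^d. Then there is a constant c = c(d,α) > 0 such that Λ^α g(x̄) ≥ g(x̄)^{1+α} / (c ‖f‖_{L^∞}^α). -/

import Mathlib

/-!
Since `g = ∂ₖ f` is maximal at `x̄`, the integrand `g(x̄) - g(x̄ - y)` is nonnegative, so `Λ^α g(x̄)`
dominates the integral over any compact set away from the origin, in particular over the box
`D = {R/2 ≤ y_k ≤ R, |y_i| ≤ R}`, on which `|y| ≤ dR`. Integrating `∂ₖ` along the `k`-th direction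
bounds `∫_D g(x̄ - y) dy` by `2 ‖f‖_∞ (2R)^(d-1)`, while `∫_D g(x̄) dy = g(x̄) (R/2) (2R)^(d-1)`. Hence
`Λ^α g(x̄) ≥ c_{d,α} (2R)^(d-1) (g(x̄) R/2 - 2 ‖f‖_∞) / (dR)^(d+α)`, and the choice
`R = 8 ‖f‖_∞ / g(x̄)` turns the right-hand side into `g(x̄)^(1+α) / (c ‖f‖_∞^α)`.
-/

open MeasureTheory Filter Set Module
open scoped Topology SchwartzMap LineDeriv

theorem setIntegral_le_of_tendsto_setIntegral_norm_ge {E : Type*} [Norm E] [MeasurableSpace E]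
    {μ : Measure E} {F : E → ℝ} (hF : ∀ y, 0 ≤ F y)
    (hint : ∀ ε > 0, IntegrableOn F {y | ε ≤ ‖y‖} μ) {L : ℝ}
    (hL : Tendsto (fun ε => ∫ y in {y | ε ≤ ‖y‖}, F y ∂μ) (𝓝[>] 0) (𝓝 L))
    {r : ℝ} (hr : 0 < r) {D : Set E} (hD : D ⊆ {y | r ≤ ‖y‖}) :
    ∫ y in D, F y ∂μ ≤ L := by
  refine ge_of_tendsto hL ?_
  filter_upwards [Ioc_mem_nhdsGT hr] with ε hε
  exact setIntegral_mono_set (hint ε hε.1) (.of_forall hF)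
    (hD.trans fun y hy => hε.2.trans hy).eventuallyLE

section Integrability

variable {E : Type*} [NormedAddCommGroup E] [NormedSpace ℝ E] [FiniteDimensional ℝ E]
  [MeasurableSpace E] [BorelSpace E] {μ : Measure E} [μ.IsAddHaarMeasure]

theorem integrableOn_div_norm_rpow_of_abs_le {h : E → ℝ} (hh : AEStronglyMeasurable h μ)
    {C : ℝ} (hC : ∀ y, |h y| ≤ C) {p : ℝ} (hp : (finrank ℝ E : ℝ) < p) {ε : ℝ} (hε : 0 < ε) :
    IntegrableOn (fun y => h y / ‖y‖ ^ p) {y | ε ≤ ‖y‖} μ := by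
  have hp0 : 0 < p := (Nat.cast_nonneg _).trans_lt hp
  have hmeas : MeasurableSet {y : E | ε ≤ ‖y‖} := measurableSet_le measurable_const measurable_norm
  refine Integrable.mono' ((integrable_one_add_norm hp).const_mul (C * (1 + ε⁻¹) ^ p)).integrableOn
    (hh.restrict.div₀ (continuous_norm.rpow_const fun _ => Or.inr hp0.le).aestronglyMeasurable) ?_
  rw [ae_restrict_iff' hmeas]
  filter_upwards with y (hy : ε ≤ ‖y‖)
  have hy0 : 0 < ‖y‖ := hε.trans_le hy
  -- `‖y‖⁻ᵖ ≤ (1 + ε⁻¹)ᵖ (1 + ‖y‖)⁻ᵖ` on `{ε ≤ ‖y‖}`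
  have hbracket : (1 + ‖y‖) ^ p ≤ (1 + ε⁻¹) ^ p * ‖y‖ ^ p := by
    rw [← Real.mul_rpow (by positivity) hy0.le]
    gcongr
    nlinarith [mul_inv_cancel₀ hε.ne', inv_pos.2 hε]
  rw [Real.norm_eq_abs, abs_div, abs_of_pos (Real.rpow_pos_of_pos hy0 p),
    Real.rpow_neg (by positivity), div_le_iff₀ (Real.rpow_pos_of_pos hy0 p)]
  have hC0 : 0 ≤ C := (abs_nonneg _).trans (hC y)
  calc |h y| ≤ C * 1 := by rw [mul_one]; exact hC y
    _ ≤ C * ((1 + ε⁻¹) ^ p * ‖y‖ ^ p / (1 + ‖y‖) ^ p) := by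
      gcongr
      exact (one_le_div (by positivity)).2 hbracket
    _ = C * (1 + ε⁻¹) ^ p * ((1 + ‖y‖) ^ p)⁻¹ * ‖y‖ ^ p := by ring

theorem setIntegral_div_rpow_le_of_tendsto {h : E → ℝ} (hh : Continuous h) (h0 : ∀ y, 0 ≤ h y)
    {C : ℝ} (hC : ∀ y, |h y| ≤ C) {p : ℝ} (hp : (finrank ℝ E : ℝ) < p) {L : ℝ}
    (hL : Tendsto (fun ε => ∫ y in {y | ε ≤ ‖y‖}, h y / ‖y‖ ^ p ∂μ) (𝓝[>] 0) (𝓝 L))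
    {D : Set E} (hD : IsCompact D) {r ρ : ℝ} (hr : 0 < r) (hDr : D ⊆ {y | r ≤ ‖y‖})
    (hDρ : ∀ y ∈ D, ‖y‖ ≤ ρ) :
    (∫ y in D, h y ∂μ) / ρ ^ p ≤ L := by
  have hint : ∀ ε > 0, IntegrableOn (fun y => h y / ‖y‖ ^ p) {y | ε ≤ ‖y‖} μ := fun ε hε =>
    integrableOn_div_norm_rpow_of_abs_le hh.aestronglyMeasurable hC hp hε
  calc (∫ y in D, h y ∂μ) / ρ ^ p = ∫ y in D, h y / ρ ^ p ∂μ := (integral_div _ _).symm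
    _ ≤ ∫ y in D, h y / ‖y‖ ^ p ∂μ := by
      refine setIntegral_mono_on ((hh.continuousOn.integrableOn_compact hD).div_const _)
        ((hint r hr).mono_set hDr) hD.isClosed.measurableSet fun y hy => ?_
      have hy0 : 0 < ‖y‖ := hr.trans_le (hDr hy)
      have hp0 : 0 ≤ p := (Nat.cast_nonneg _).trans hp.le
      gcongr
      exacts [h0 y, hDρ y hy]
    _ ≤ L := setIntegral_le_of_tendsto_setIntegral_norm_ge
      (fun y => div_nonneg (h0 y) (by positivity)) hint hL hr hDr

end Integrability

theorem abs_setIntegral_Icc_fderiv_single_le {n : ℕ} {φ : (Fin (n + 1) → ℝ) → ℝ}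
    (hφ : ContDiff ℝ 1 φ) {S : ℝ} (hS : ∀ x, |φ x| ≤ S) (k : Fin (n + 1))
    {a b : Fin (n + 1) → ℝ} (hab : a ≤ b) :
    |∫ x in Icc a b, fderiv ℝ φ x (Pi.single k 1)| ≤
      2 * S * ∏ j, (b (k.succAbove j) - a (k.succAbove j)) := by
  -- divergence theorem for the field `φ eₖ`: only the two faces orthogonal to `eₖ` contribute
  have hdivergence : ∀ x, ∑ i, (if i = k then fderiv ℝ φ x else 0) (Pi.single i 1) =
      fderiv ℝ φ x (Pi.single k 1) := fun x => by
    rw [Finset.sum_eq_single k (fun i _ hi => by simp [hi]) (by simp), if_pos rfl]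
  have hdiv := integral_divergence_of_hasFDerivAt_off_countable' a b hab
    (fun i => if i = k then φ else 0) (fun i x => if i = k then fderiv ℝ φ x else 0) ∅
    countable_empty
    (fun i => by split_ifs <;> [exact hφ.continuous.continuousOn; exact continuousOn_const])
    (fun x _ i => by
      split_ifs
      · exact (hφ.differentiable one_ne_zero x).hasFDerivAt
      · exact hasFDerivAt_const 0 x)
    (by
      simp only [hdivergence]
      exact ((hφ.continuous_fderiv one_ne_zero).clm_apply continuous_const)
        |>.continuousOn.integrableOn_compact isCompact_Icc)
  simp only [hdivergence] at hdiv
  rw [hdiv, Finset.sum_eq_single k (fun i _ hi => by simp [hi]) (by simp), if_pos rfl]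
  have hface : ∀ c, |∫ x in Icc (a ∘ k.succAbove) (b ∘ k.succAbove), φ (k.insertNth c x)| ≤
      S * ∏ j, (b (k.succAbove j) - a (k.succAbove j)) := fun c => by
    have := norm_setIntegral_le_of_norm_le_const (f := fun x => φ (k.insertNth c x)) (μ := volume)
      isCompact_Icc.measure_lt_top fun x (_ : x ∈ Icc (a ∘ k.succAbove) (b ∘ k.succAbove)) =>
        hS (k.insertNth c x)
    rwa [measureReal_def, Real.volume_Icc_pi_toReal (a := a ∘ k.succAbove) (b := b ∘ k.succAbove)
      fun j => hab _] at this
  linarith [abs_sub (∫ x in Icc (a ∘ k.succAbove) (b ∘ k.succAbove), φ (k.insertNth (b k) x))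
    (∫ x in Icc (a ∘ k.succAbove) (b ∘ k.succAbove), φ (k.insertNth (a k) x)),
    hface (a k), hface (b k)]

namespace EuclideanSpace

theorem norm_le_card_mul_of_abs_le {ι : Type*} [Fintype ι]
    {y : EuclideanSpace ℝ ι} {R : ℝ} (h : ∀ i, |y i| ≤ R) : ‖y‖ ≤ Fintype.card ι * R := by
  let b := EuclideanSpace.basisFun ι ℝ
  calc ‖y‖ = ‖∑ i, y i • b i‖ := by nth_rw 1 [← b.toBasis.sum_repr y]; simp [b]
    _ ≤ ∑ i, ‖y i • b i‖ := norm_sum_le _ _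
    _ ≤ ∑ _i, R := Finset.sum_le_sum fun i _ => by simpa [norm_smul, b.orthonormal.1 i] using h i
    _ = Fintype.card ι * R := by simp

theorem abs_setIntegral_Icc_fderiv_single_le {n : ℕ}
    {ψ : EuclideanSpace ℝ (Fin (n + 1)) → ℝ} (hψ : ContDiff ℝ 1 ψ) {S : ℝ}
    (hS : ∀ y, |ψ y| ≤ S) (k : Fin (n + 1)) {a b : Fin (n + 1) → ℝ} (hab : a ≤ b) :
    |∫ y in WithLp.ofLp ⁻¹' Icc a b, fderiv ℝ ψ y (single k 1)| ≤
      2 * S * ∏ j, (b (k.succAbove j) - a (k.succAbove j)) := by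
  set T := (EuclideanSpace.equiv (Fin (n + 1)) ℝ).symm
  have hderiv : ∀ y, fderiv ℝ ψ y (single k 1) =
      fderiv ℝ (ψ ∘ T) (WithLp.ofLp y) (Pi.single k 1) := fun y => by
    rw [T.comp_right_fderiv]; rfl
  simp only [hderiv]
  rw [(PiLp.volume_preserving_ofLp _).setIntegral_preimage_emb
    (MeasurableEquiv.toLp 2 _).symm.measurableEmbedding
    (fun x => fderiv ℝ (ψ ∘ T) x (Pi.single k 1))]
  exact _root_.abs_setIntegral_Icc_fderiv_single_le (hψ.comp T.contDiff) (fun x => hS _) k hab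

end EuclideanSpace

-- `{y | R / 2 ≤ y k ≤ R, |y i| ≤ R for i ≠ k}`
def halfBox {d : ℕ} (k : Fin d) (R : ℝ) : Set (EuclideanSpace ℝ (Fin d)) :=
  WithLp.ofLp ⁻¹' Icc (Function.update (fun _ => -R) k (R / 2)) (fun _ => R)

section halfBox

variable {d n : ℕ} {k : Fin d} {R : ℝ} {y : EuclideanSpace ℝ (Fin d)}

theorem half_le_apply_of_mem_halfBox (hy : y ∈ halfBox k R) : R / 2 ≤ y k := by
  simpa using hy.1 k

theorem half_le_norm_of_mem_halfBox (hy : y ∈ halfBox k R) : R / 2 ≤ ‖y‖ :=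
  (half_le_apply_of_mem_halfBox hy).trans <| (le_abs_self _).trans <| PiLp.norm_apply_le y k

theorem norm_le_of_mem_halfBox (hy : y ∈ halfBox k R) : ‖y‖ ≤ d * R := by
  have hR : 0 ≤ R := by linarith [half_le_apply_of_mem_halfBox hy, hy.2 k]
  simpa using EuclideanSpace.norm_le_card_mul_of_abs_le fun i => abs_le.2 ⟨by
    rcases eq_or_ne i k with rfl | hi
    · linarith [half_le_apply_of_mem_halfBox hy]
    · simpa [hi] using hy.1 i, hy.2 i⟩

theorem isCompact_halfBox : IsCompact (halfBox k R) :=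
  (EuclideanSpace.equiv (Fin d) ℝ).toHomeomorph.isCompact_preimage.2 isCompact_Icc

theorem lower_le_upper_halfBox (hR : 0 ≤ R) (k : Fin d) :
    Function.update (fun _ => -R) k (R / 2) ≤ fun _ => R := by
  intro i
  rcases eq_or_ne i k with rfl | hi <;> simp [*]

theorem sub_succAbove_halfBox (k : Fin (n + 1)) (j : Fin n) :
    R - Function.update (fun _ => -R) k (R / 2) (k.succAbove j) = 2 * R := by
  simp [Fin.succAbove_ne]; ring

theorem volume_real_halfBox (hR : 0 ≤ R) (k : Fin (n + 1)) :
    volume.real (halfBox k R) = R / 2 * (2 * R) ^ n := by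
  rw [measureReal_def, halfBox, (PiLp.volume_preserving_ofLp _).measure_preimage
    measurableSet_Icc.nullMeasurableSet, Real.volume_Icc_pi_toReal (lower_le_upper_halfBox hR k),
    Fin.prod_univ_succAbove _ k]
  simp only [sub_succAbove_halfBox, Finset.prod_const, Finset.card_univ, Fintype.card_fin,
    Function.update_self]
  ring

theorem abs_setIntegral_halfBox_fderiv_single_le {ψ : EuclideanSpace ℝ (Fin (n + 1)) → ℝ}
    (hψ : ContDiff ℝ 1 ψ) {S : ℝ} (hS : ∀ y, |ψ y| ≤ S) (k : Fin (n + 1)) (hR : 0 ≤ R) :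
    |∫ y in halfBox k R, fderiv ℝ ψ y (EuclideanSpace.single k 1)| ≤ 2 * S * (2 * R) ^ n := by
  have := EuclideanSpace.abs_setIntegral_Icc_fderiv_single_le hψ hS k (lower_le_upper_halfBox hR k)
  rwa [Finset.prod_congr rfl fun j _ => sub_succAbove_halfBox k j, Finset.prod_const,
    Finset.card_univ, Fintype.card_fin] at this

end halfBox

namespace SchwartzMap

variable {E : Type*} [NormedAddCommGroup E] [NormedSpace ℝ E]

theorem abs_le_iSup_abs (f : 𝓢(E, ℝ)) (x : E) : |f x| ≤ ⨆ x, |f x| :=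
  le_ciSup ⟨SchwartzMap.seminorm ℝ 0 0 f, by rintro _ ⟨x, rfl⟩; exact f.norm_le_seminorm ℝ x⟩ x

end SchwartzMap

section FractionalLaplacian

variable {n : ℕ}

theorem setIntegral_halfBox_fderiv_const_sub_le (f : 𝓢(EuclideanSpace ℝ (Fin (n + 1)), ℝ))
    (xm : EuclideanSpace ℝ (Fin (n + 1))) (k : Fin (n + 1)) {R : ℝ} (hR : 0 ≤ R) :
    ∫ y in halfBox k R, fderiv ℝ f (xm - y) (EuclideanSpace.single k 1) ≤
      2 * (⨆ x, |f x|) * (2 * R) ^ n := by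
  have hψ : ContDiff ℝ 1 fun y => f (xm - y) :=
    ((f.smooth ⊤).of_le (by simp)).comp (contDiff_const.sub contDiff_id)
  have hderiv : ∀ y, fderiv ℝ (fun y => f (xm - y)) y (EuclideanSpace.single k 1) =
      -fderiv ℝ f (xm - y) (EuclideanSpace.single k 1) := fun y => by
    have : HasFDerivAt (fun y => f (xm - y))
        ((fderiv ℝ f (xm - y)).comp (-ContinuousLinearMap.id ℝ _)) y :=
      f.differentiableAt.hasFDerivAt.comp y ((hasFDerivAt_id y).const_sub xm)
    simp [this.fderiv]
  have := abs_setIntegral_halfBox_fderiv_single_le hψ (fun y => f.abs_le_iSup_abs _) k hR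
  simp only [hderiv, integral_neg, abs_neg] at this
  exact (le_abs_self _).trans this

theorem le_of_tendsto_truncated_integral {α cdα : ℝ} (hα : 0 < α) (hcdα : 0 < cdα)
    (f : 𝓢(EuclideanSpace ℝ (Fin (n + 1)), ℝ)) (k : Fin (n + 1))
    (xm : EuclideanSpace ℝ (Fin (n + 1))) {L R : ℝ}
    (hmax : ∀ x, fderiv ℝ f x (EuclideanSpace.single k 1) ≤
      fderiv ℝ f xm (EuclideanSpace.single k 1))
    (hL : Tendsto (fun ε : ℝ => ∫ y in {y : EuclideanSpace ℝ (Fin (n + 1)) | ε ≤ ‖y‖},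
        cdα * (fderiv ℝ f xm (EuclideanSpace.single k 1) -
          fderiv ℝ f (xm - y) (EuclideanSpace.single k 1)) / ‖y‖ ^ (((n + 1 : ℕ) : ℝ) + α))
      (𝓝[>] 0) (𝓝 L))
    (hR : 0 < R) :
    cdα * (2 * R) ^ n * (fderiv ℝ f xm (EuclideanSpace.single k 1) * R / 2 - 2 * ⨆ x, |f x|) /
      ((n + 1 : ℕ) * R) ^ (((n + 1 : ℕ) : ℝ) + α) ≤ L := by
  set g : EuclideanSpace ℝ (Fin (n + 1)) → ℝ := fun x => fderiv ℝ f x (EuclideanSpace.single k 1)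
  let G : 𝓢(EuclideanSpace ℝ (Fin (n + 1)), ℝ) := ∂_{EuclideanSpace.single k (1 : ℝ)} f
  have hGg : ⇑G = g := rfl
  obtain ⟨B, hB⟩ : ∃ B, ∀ x, |g x| ≤ B := ⟨_, hGg ▸ G.abs_le_iSup_abs⟩
  have hcont : Continuous fun y => g (xm - y) := hGg ▸ G.continuous.comp (by fun_prop)
  have hbox := setIntegral_div_rpow_le_of_tendsto (h := fun y => cdα * (g xm - g (xm - y)))
    (continuous_const.mul (continuous_const.sub hcont))
    (fun y => mul_nonneg hcdα.le (sub_nonneg.2 (hmax _))) (C := cdα * (B + B))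
    (fun y => by
      rw [abs_mul, abs_of_pos hcdα]
      gcongr
      exact (abs_sub _ _).trans (add_le_add (hB xm) (hB _)))
    (by simp [hα]) hL (isCompact_halfBox (k := k)) (half_pos hR) (fun y => half_le_norm_of_mem_halfBox)
    (fun y => norm_le_of_mem_halfBox)
  rw [integral_const_mul, integral_sub
    (integrableOn_const (C := g xm) isCompact_halfBox.measure_lt_top.ne)
    (hcont.continuousOn.integrableOn_compact isCompact_halfBox), setIntegral_const,
    smul_eq_mul, volume_real_halfBox hR.le] at hbox
  refine le_trans ?_ hbox
  rw [show cdα * (2 * R) ^ n * (g xm * R / 2 - 2 * ⨆ x, |f x|) =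
    cdα * (R / 2 * (2 * R) ^ n * g xm - 2 * (⨆ x, |f x|) * (2 * R) ^ n) by ring]
  gcongr
  exact setIntegral_halfBox_fderiv_const_sub_le f xm k hR.le

theorem rpow_div_eq_halfBox_estimate {α cdα M S : ℝ} (hcdα : 0 < cdα) (hM : 0 < M)
    (hS : 0 < S) :
    M ^ (1 + α) / (((n + 1 : ℕ) : ℝ) ^ (((n + 1 : ℕ) : ℝ) + α) * 8 ^ (1 + α) /
        (cdα * 2 ^ (n + 1)) * S ^ α) =
      cdα * (2 * (8 * S / M)) ^ n * (M * (8 * S / M) / 2 - 2 * S) /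
        ((n + 1 : ℕ) * (8 * S / M)) ^ (((n + 1 : ℕ) : ℝ) + α) := by
  set R := 8 * S / M with hR
  have hR0 : 0 < R := by positivity
  have hMR : M * R / 2 - 2 * S = 2 * S := by rw [hR]; field_simp; ring
  have hR1 : R ^ (1 + α) = 8 ^ (1 + α) * (S * S ^ α) / M ^ (1 + α) := by
    rw [hR, Real.div_rpow (by positivity) hM.le, Real.mul_rpow (by norm_num) hS.le,
      Real.rpow_add hS, Real.rpow_one]
  have hsplit : (((n + 1 : ℕ) : ℝ) + α) = n + (1 + α) := by push_cast; ring
  rw [hMR, Real.mul_rpow (by positivity) hR0.le, hsplit, Real.rpow_add hR0, Real.rpow_natCast, hR1,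
    ← hsplit]
  clear_value R
  field_simp
  ring

end FractionalLaplacian

theorem stmt_6_general (d : ℕ) (hd : 0 < d) (α : ℝ) (hα : 0 < α)
    (cdα : ℝ) (hcdα : 0 < cdα) :
    ∃ c : ℝ, 0 < c ∧
      ∀ (f : SchwartzMap (EuclideanSpace ℝ (Fin d)) ℝ) (k : Fin d)
        (xm : EuclideanSpace ℝ (Fin d)) (L : ℝ),
        (∀ x, fderiv ℝ (⇑f) x (EuclideanSpace.single k 1) ≤
          fderiv ℝ (⇑f) xm (EuclideanSpace.single k 1)) →
        0 < fderiv ℝ (⇑f) xm (EuclideanSpace.single k 1) →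
        Tendsto (fun ε : ℝ =>
            ∫ y in {y : EuclideanSpace ℝ (Fin d) | ε ≤ ‖y‖},
              cdα * (fderiv ℝ (⇑f) xm (EuclideanSpace.single k 1) -
                fderiv ℝ (⇑f) (xm - y) (EuclideanSpace.single k 1)) /
                ‖y‖ ^ ((d : ℝ) + α))
          (nhdsWithin 0 (Set.Ioi 0)) (nhds L) →
        (fderiv ℝ (⇑f) xm (EuclideanSpace.single k 1)) ^ (1 + α) /
          (c * (⨆ x, |f x|) ^ α) ≤ L := by
  obtain ⟨n, rfl⟩ := Nat.exists_eq_add_one_of_ne_zero hd.ne'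
  refine ⟨((n + 1 : ℕ) : ℝ) ^ (((n + 1 : ℕ) : ℝ) + α) * 8 ^ (1 + α) / (cdα * 2 ^ (n + 1)),
    by positivity, fun f k xm L hmax hpos hL => ?_⟩
  have hS : 0 < ⨆ x, |f x| := by
    by_contra! hS
    have hf : ⇑f = 0 := funext fun x => abs_nonpos_iff.1 ((f.abs_le_iSup_abs x).trans hS)
    simp [hf] at hpos
  rw [rpow_div_eq_halfBox_estimate hcdα hpos hS]
  exact le_of_tendsto_truncated_integral hα hcdα f k xm hmax hL (by positivity)

/-- **`L^∞` nonlinear lower bound.** Let `f` be a Schwartz function on `ℝ^d`,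
`0 < α < 2`, and `g = ∂_k f`. If `g` attains a positive maximum at `xm`, then
there is a constant `c = c(d,α) > 0` with
`Λ^α g(xm) ≥ g(xm)^{1+α} / (c ‖f‖_{L^∞}^α)`, where `Λ^α g(xm)` is the value `L`
of the principal value integral `c_{d,α} P.V. ∫ (g(xm) - g(xm-y))/|y|^{d+α} dy`. -/
theorem stmt_6 (d : ℕ) (hd : 0 < d) (α : ℝ) (hα : 0 < α) (hα' : α < 2)
    (cdα : ℝ) (hcdα : 0 < cdα) :
    ∃ c : ℝ, 0 < c ∧
      ∀ (f : SchwartzMap (EuclideanSpace ℝ (Fin d)) ℝ) (k : Fin d)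
        (xm : EuclideanSpace ℝ (Fin d)) (L : ℝ),
        (∀ x, fderiv ℝ (⇑f) x (EuclideanSpace.single k 1) ≤
          fderiv ℝ (⇑f) xm (EuclideanSpace.single k 1)) →
        0 < fderiv ℝ (⇑f) xm (EuclideanSpace.single k 1) →
        Tendsto (fun ε : ℝ =>
            ∫ y in {y : EuclideanSpace ℝ (Fin d) | ε ≤ ‖y‖},
              cdα * (fderiv ℝ (⇑f) xm (EuclideanSpace.single k 1) -
                fderiv ℝ (⇑f) (xm - y) (EuclideanSpace.single k 1)) /
                ‖y‖ ^ ((d : ℝ) + α))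
          (nhdsWithin 0 (Set.Ioi 0)) (nhds L) →
        (fderiv ℝ (⇑f) xm (EuclideanSpace.single k 1)) ^ (1 + α) /
          (c * (⨆ x, |f x|) ^ α) ≤ L :=
  stmt_6_general d hd α hα cdα hcdα
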